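/- arXiv:1510.04678 — 4 statements merged into one kernel-verified Lean document; each statement's English description precedes it below -/
import Mathlib

section
/- (Berestycki–Lions convolution asymptotics) Let f ∈ C(ℝ) ∩ L^∞(ℝ) and g ∈ C(ℝ) with g even. Suppose for some α ≥ 0, β ≥ 0, γ₀ ∈ ℝ: f(x) e^{α|x|} |x|^β → γ₀ as |x| → ∞, and ∫_ℝ |g(x)| e^{α|x|}(1 + |x|^β) dx < ∞. Then e^{α|y|} |y|^β ∫_ℝ g(x+y) f(x) dx → γ₀ ∫_ℝ g(x) e^{−αx} dx as |y| → ∞. -/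
open Filter MeasureTheory Real

/-!
Write `ρ(y) = e^{α|y|} |y|^β` and `w(x) = e^{α|x|} (1 + |x|^β)`. After the shift `x ↦ x - y` the
quantity becomes `∫ g(x) f(x - y) ρ(y) dx`. The weight is submultiplicative up to a constant,
`w(x + y) ≤ 2^β w(x) w(y)`, and `|f| w` is bounded, so the integrand is dominated by a multiple of
the integrable `|g| w`. Pointwise `f(x - y) ρ(y) → γ₀ e^{-αx}` as `y → -∞`, and dominated
convergence gives the limit along `atBot`; the limit along `atTop` follows by applying this to
`x ↦ f(-x)`, using that `g` is even.
-/

lemma add_rpow_le_two_rpow_mul_add_rpow {β : ℝ} (hβ : 0 ≤ β) {a b : ℝ} (ha : 0 ≤ a) (hb : 0 ≤ b) :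
    (a + b) ^ β ≤ 2 ^ β * (a ^ β + b ^ β) := by
  wlog hab : a ≤ b generalizing a b
  · simpa only [add_comm] using this hb ha (le_of_not_ge hab)
  calc (a + b) ^ β ≤ (2 * b) ^ β := by gcongr; linarith
    _ = 2 ^ β * b ^ β := mul_rpow zero_le_two hb
    _ ≤ 2 ^ β * (a ^ β + b ^ β) := by gcongr; exact le_add_of_nonneg_left (rpow_nonneg ha β)

section Weight

variable {α β : ℝ}

lemma one_add_rpow_abs_add_le (hβ : 0 ≤ β) (a b : ℝ) :
    1 + |a + b| ^ β ≤ 2 ^ β * ((1 + |a| ^ β) * (1 + |b| ^ β)) := by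
  have h_two : 1 ≤ (2 : ℝ) ^ β := one_le_rpow one_le_two hβ
  have h_abs : |a + b| ^ β ≤ (|a| + |b|) ^ β := rpow_le_rpow (abs_nonneg _) (abs_add_le a b) hβ
  have h_split := add_rpow_le_two_rpow_mul_add_rpow hβ (abs_nonneg a) (abs_nonneg b)
  have ha := rpow_nonneg (abs_nonneg a) β
  have hb := rpow_nonneg (abs_nonneg b) β
  nlinarith [mul_nonneg ha hb, mul_nonneg (zero_le_one.trans h_two) (mul_nonneg ha hb)]

lemma exp_mul_one_add_rpow_abs_add_le (hα : 0 ≤ α) (hβ : 0 ≤ β) (a b : ℝ) :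
    exp (α * |a + b|) * (1 + |a + b| ^ β) ≤
      2 ^ β * (exp (α * |a|) * (1 + |a| ^ β)) * (exp (α * |b|) * (1 + |b| ^ β)) := by
  have h_exp : exp (α * |a + b|) ≤ exp (α * |a|) * exp (α * |b|) := by
    rw [← exp_add, ← mul_add]
    gcongr
    exact abs_add_le a b
  calc exp (α * |a + b|) * (1 + |a + b| ^ β)
      ≤ (exp (α * |a|) * exp (α * |b|)) * (2 ^ β * ((1 + |a| ^ β) * (1 + |b| ^ β))) := by
        gcongr
        exact one_add_rpow_abs_add_le hβ a b
    _ = _ := by ring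

end Weight

section Asymptotics

variable {f g : ℝ → ℝ} {α β γ : ℝ}

lemma exists_abs_mul_exp_mul_one_add_rpow_le (hβ : 0 ≤ β) (hf : Continuous f)
    (hf_lim : Tendsto (fun x => f x * exp (α * |x|) * |x| ^ β) (cocompact ℝ) (nhds γ)) :
    ∃ C, ∀ x, |f x| * (exp (α * |x|) * (1 + |x| ^ β)) ≤ C := by
  set h : ℝ → ℝ := fun x => f x * (exp (α * |x|) * (1 + |x| ^ β))
  have hh : Continuous h := by
    have := continuous_abs.rpow_const (fun _ => Or.inr hβ)
    fun_prop
  have h_bigO : h =O[cocompact ℝ] fun x => f x * exp (α * |x|) * |x| ^ β := by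
    refine .of_bound 2 ?_
    filter_upwards [tendsto_norm_cocompact_atTop.eventually_ge_atTop 1] with x hx
    have h_one : 1 ≤ |x| ^ β := one_le_rpow hx hβ
    simp only [h, norm_mul, norm_eq_abs, abs_of_pos (exp_pos _),
      abs_of_nonneg (rpow_nonneg (abs_nonneg x) β),
      abs_of_nonneg (add_nonneg zero_le_one (rpow_nonneg (abs_nonneg x) β))]
    have := mul_nonneg (abs_nonneg (f x)) (exp_pos (α * |x|)).le
    nlinarith
  obtain ⟨C, hC⟩ := isBounded_iff_forall_norm_le.1 <|
    hh.isBounded_range_iff_isBigO.2 (h_bigO.trans (hf_lim.isBigO_one ℝ))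
  refine ⟨C, fun x => ?_⟩
  simpa [h, abs_mul, abs_of_pos (exp_pos _),
    abs_of_nonneg (add_nonneg zero_le_one (rpow_nonneg (abs_nonneg x) β))] using hC _ ⟨x, rfl⟩

lemma abs_comp_sub_mul_exp_mul_rpow_le (hα : 0 ≤ α) (hβ : 0 ≤ β) {C : ℝ}
    (hC : ∀ z, |f z| * (exp (α * |z|) * (1 + |z| ^ β)) ≤ C) (x y : ℝ) :
    |f (x - y)| * (exp (α * |y|) * |y| ^ β) ≤
      2 ^ β * C * (exp (α * |x|) * (1 + |x| ^ β)) := by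
  have h_weight : exp (α * |y|) * |y| ^ β ≤
      2 ^ β * (exp (α * |x|) * (1 + |x| ^ β)) * (exp (α * |x - y|) * (1 + |x - y| ^ β)) := by
    calc exp (α * |y|) * |y| ^ β ≤ exp (α * |y|) * (1 + |y| ^ β) := by gcongr; linarith
      _ = exp (α * |x + (y - x)|) * (1 + |x + (y - x)| ^ β) := by rw [add_sub_cancel]
      _ ≤ _ := by
        rw [abs_sub_comm x y]
        exact exp_mul_one_add_rpow_abs_add_le hα hβ x (y - x)
  calc |f (x - y)| * (exp (α * |y|) * |y| ^ β)
      ≤ |f (x - y)| * (2 ^ β * (exp (α * |x|) * (1 + |x| ^ β)) *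
          (exp (α * |x - y|) * (1 + |x - y| ^ β))) := by gcongr
    _ = 2 ^ β * (exp (α * |x|) * (1 + |x| ^ β)) *
          (|f (x - y)| * (exp (α * |x - y|) * (1 + |x - y| ^ β))) := by ring
    _ ≤ 2 ^ β * (exp (α * |x|) * (1 + |x| ^ β)) * C := by gcongr; exact hC _
    _ = _ := by ring

lemma tendsto_comp_sub_mul_exp_mul_rpow_atBot
    (hf_lim : Tendsto (fun z => f z * exp (α * |z|) * |z| ^ β) atTop (nhds γ)) (x : ℝ) :
    Tendsto (fun y => f (x - y) * (exp (α * |y|) * |y| ^ β)) atBot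
      (nhds (γ * exp (-(α * x)))) := by
  have h_shift : Tendsto (fun y => x - y) atBot atTop := by
    simpa only [sub_eq_add_neg] using tendsto_atTop_add_const_left _ x tendsto_neg_atBot_atTop
  have h_ratio : Tendsto (fun y => -y / (x - y)) atBot (nhds 1) := by
    have h_zero := (tendsto_const_nhds (x := x)).div_atTop h_shift
    refine (by simpa using h_zero.const_sub 1 : Tendsto (fun y => 1 - x / (x - y)) _ _).congr' ?_
    filter_upwards [eventually_lt_atBot x] with y hy
    field_simp [(sub_pos.2 hy).ne']
    ring
  have h_lim := ((hf_lim.comp h_shift).mul_const (exp (-(α * x)))).mul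
    (h_ratio.rpow_const (p := β) (Or.inl one_ne_zero))
  rw [one_rpow, mul_one] at h_lim
  refine h_lim.congr' ?_
  filter_upwards [eventually_lt_atBot (min 0 x)] with y hy
  have hy0 : y < 0 := hy.trans_le (min_le_left _ _)
  have hxy : 0 < x - y := sub_pos.2 (hy.trans_le (min_le_right _ _))
  simp only [Function.comp_apply, abs_of_neg hy0, abs_of_pos hxy,
    div_rpow (neg_nonneg.2 hy0.le) hxy.le]
  have h_exp : exp (α * (x - y)) * exp (-(α * x)) = exp (α * -y) := by
    rw [← exp_add]; ring_nf
  rw [← h_exp]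
  field_simp [(rpow_pos_of_pos hxy β).ne']

theorem tendsto_exp_mul_rpow_mul_integral_comp_add_mul_atBot (hα : 0 ≤ α) (hβ : 0 ≤ β)
    (hf : Continuous f) (hg : AEStronglyMeasurable g)
    (hf_lim : Tendsto (fun x => f x * exp (α * |x|) * |x| ^ β) (cocompact ℝ) (nhds γ))
    (hg_int : Integrable (fun x => |g x| * exp (α * |x|) * (1 + |x| ^ β))) :
    Tendsto (fun y => exp (α * |y|) * |y| ^ β * ∫ x, g (x + y) * f x) atBot
      (nhds (γ * ∫ x, g x * exp (-(α * x)))) := by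
  obtain ⟨C, hC⟩ := exists_abs_mul_exp_mul_one_add_rpow_le hβ hf hf_lim
  have h_shift (y : ℝ) : exp (α * |y|) * |y| ^ β * ∫ x, g (x + y) * f x =
      ∫ x, g x * (f (x - y) * (exp (α * |y|) * |y| ^ β)) := by
    rw [← integral_sub_right_eq_self _ y, ← integral_const_mul]
    simp only [sub_add_cancel]
    congr 1; ext x; ring
  simp only [h_shift, ← integral_const_mul, mul_left_comm γ]
  refine tendsto_integral_filter_of_dominated_convergence
    (fun x => 2 ^ β * C * (|g x| * exp (α * |x|) * (1 + |x| ^ β))) ?_ ?_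
    (hg_int.const_mul _) (ae_of_all _ fun x => (tendsto_comp_sub_mul_exp_mul_rpow_atBot
      (hf_lim.mono_left atTop_le_cocompact) x).const_mul _)
  · exact .of_forall fun y => hg.mul (by fun_prop : Continuous _).aestronglyMeasurable
  · refine .of_forall fun y => ae_of_all _ fun x => ?_
    rw [norm_mul, norm_eq_abs, norm_eq_abs]
    calc |g x| * |f (x - y) * (exp (α * |y|) * |y| ^ β)|
        = |g x| * (|f (x - y)| * (exp (α * |y|) * |y| ^ β)) := by
          rw [abs_mul, abs_of_nonneg (by positivity : 0 ≤ exp (α * |y|) * |y| ^ β)]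
      _ ≤ |g x| * (2 ^ β * C * (exp (α * |x|) * (1 + |x| ^ β))) :=
          mul_le_mul_of_nonneg_left (abs_comp_sub_mul_exp_mul_rpow_le hα hβ hC x y) (abs_nonneg _)
      _ = _ := by ring

end Asymptotics

theorem berestycki_lions_convolution_general (f g : ℝ → ℝ) (α β γ₀ : ℝ)
    (hα : 0 ≤ α) (hβ : 0 ≤ β)
    (hf_cont : Continuous f)
    (hg_cont : Continuous g) (hg_even : ∀ x : ℝ, g (-x) = g x)
    (hf_lim : Tendsto (fun x : ℝ => f x * Real.exp (α * |x|) * |x| ^ β)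
      (cocompact ℝ) (nhds γ₀))
    (hg_int : MeasureTheory.Integrable
      (fun x : ℝ => |g x| * Real.exp (α * |x|) * (1 + |x| ^ β))) :
    Tendsto (fun y : ℝ =>
        Real.exp (α * |y|) * |y| ^ β * ∫ x : ℝ, g (x + y) * f x)
      (cocompact ℝ)
      (nhds (γ₀ * ∫ x : ℝ, g x * Real.exp (-(α * x)))) := by
  rw [cocompact_eq_atBot_atTop, tendsto_sup]
  refine ⟨tendsto_exp_mul_rpow_mul_integral_comp_add_mul_atBot hα hβ hf_cont
    hg_cont.aestronglyMeasurable hf_lim hg_int, ?_⟩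
  have hf_neg_lim : Tendsto (fun x => f (-x) * exp (α * |x|) * |x| ^ β) (cocompact ℝ)
      (nhds γ₀) := by
    simpa only [Function.comp_def, Homeomorph.coe_neg, abs_neg] using
      hf_lim.comp (Homeomorph.neg ℝ).map_cocompact.le
  refine ((tendsto_exp_mul_rpow_mul_integral_comp_add_mul_atBot hα hβ
    (hf_cont.comp continuous_neg) hg_cont.aestronglyMeasurable hf_neg_lim hg_int).comp
    tendsto_neg_atTop_atBot).congr fun y => ?_
  simp only [Function.comp_apply, abs_neg]
  rw [← integral_neg_eq_self]
  simp only [neg_neg, ← neg_add, hg_even]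

theorem berestycki_lions_convolution (f g : ℝ → ℝ) (α β γ₀ : ℝ)
    (hα : 0 ≤ α) (hβ : 0 ≤ β)
    (hf_cont : Continuous f) (hf_bdd : ∃ M : ℝ, ∀ x : ℝ, |f x| ≤ M)
    (hg_cont : Continuous g) (hg_even : ∀ x : ℝ, g (-x) = g x)
    (hf_lim : Tendsto (fun x : ℝ => f x * Real.exp (α * |x|) * |x| ^ β)
      (cocompact ℝ) (nhds γ₀))
    (hg_int : MeasureTheory.Integrable
      (fun x : ℝ => |g x| * Real.exp (α * |x|) * (1 + |x| ^ β))) :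
    Tendsto (fun y : ℝ =>
        Real.exp (α * |y|) * |y| ^ β * ∫ x : ℝ, g (x + y) * f x)
      (cocompact ℝ)
      (nhds (γ₀ * ∫ x : ℝ, g x * Real.exp (-(α * x)))) :=
  berestycki_lions_convolution_general f g α β γ₀ hα hβ hf_cont hg_cont hg_even hf_lim hg_int
end

section
/- Let γ₀ > 0, p > 1, and let w be the explicit positive even solution of w'' − γ₀ w + w^p = 0 given by w(t) = γ₀^{1/(p−1)}((p+1)/2)^{1/(p−1)} cosh(((p−1)/2)√γ₀ t)^{−2/(p−1)}. For η > θ > 0 with η + θ ≤ p + 1, one has ∫_ℝ w(t−r)^η w(t−s)^θ dt = (1 + o(1)) w(|r−s|)^θ ∫_ℝ w(t)^η e^{θ√γ₀ t} dt as |r − s| → ∞. -/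
/-! The profile `w` decays like `e^{-κ|x|}` with `κ = √γ₀`, and `w x * e^{κx} → M > 0`.
After a translation and a reflection, the interaction integral becomes
`∫ w(t)^η w(t - L)^θ dt` with `L = |r - s|`. Multiplied by `e^{θκL}`, its integrand is
`w(t)^η e^{θκt} · (w(L - t) e^{κ(L - t)})^θ`: the first factor is integrable because `η > θ`, the
second is bounded and tends to `M^θ`, so by dominated convergence the product tends to
`M^θ ∫ w^η e^{θκt}`. This is also the limit of `w(L)^θ e^{θκL} ∫ w^η e^{θκt}`, so the two sides
are asymptotically equivalent as `L → ∞`. -/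

open MeasureTheory Real Filter Asymptotics Topology Set

lemma integrable_exp_neg_mul_abs {c : ℝ} (hc : 0 < c) :
    Integrable fun x : ℝ => exp (-c * |x|) := by
  have hIoi : IntegrableOn (fun x : ℝ => exp (-c * |x|)) (Ioi 0) :=
    (exp_neg_integrableOn_Ioi 0 hc).congr_fun
      (fun x hx => by rw [abs_of_pos (mem_Ioi.1 hx)]) measurableSet_Ioi
  have hIio : IntegrableOn (fun x : ℝ => exp (-c * |x|)) (Iio 0) := by
    simpa only [abs_neg, neg_Ioi, neg_zero] using hIoi.comp_neg
  rw [← integrableOn_univ, ← Iio_union_Ici]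
  exact hIio.union ((integrableOn_Ici_iff_integrableOn_Ioi).2 hIoi)

lemma integral_comp_sub_mul_comp_sub_of_even {f g : ℝ → ℝ} (hf : f.Even) (hg : g.Even)
    (r s : ℝ) : ∫ t, f (t - r) * g (t - s) = ∫ t, f t * g (t - |r - s|) := by
  have htrans : ∫ t, f (t - r) * g (t - s) = ∫ t, f t * g (t - (s - r)) := by
    rw [← integral_add_right_eq_self _ r]
    simp only [add_sub_cancel_right, add_sub_assoc, sub_sub_eq_add_sub]
  rcases le_total r s with h | h
  · rw [htrans, abs_of_nonpos (sub_nonpos.2 h), neg_sub]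
  · rw [htrans, abs_of_nonneg (sub_nonneg.2 h), ← integral_neg_eq_self]
    congr! 2 with t
    rw [hf, ← hg]
    ring_nf

lemma Asymptotics.IsEquivalent.exists_pos_forall_abs_sub_le {u v : ℝ → ℝ} (h : u ~[atTop] v)
    (hv : ∀ x, 0 ≤ v x) {δ : ℝ} (hδ : 0 < δ) :
    ∃ R, 0 < R ∧ ∀ x, R ≤ x → |u x - v x| ≤ δ * v x := by
  obtain ⟨R, hR⟩ := eventually_atTop.1 (h.isLittleO.bound hδ)
  refine ⟨max R 1, by positivity, fun x hx => ?_⟩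
  simpa [abs_of_nonneg (hv x)] using hR x (le_of_max_le_left hx)

lemma Real.cosh_rpow_neg_le {b : ℝ} (hb : 0 ≤ b) (y : ℝ) :
    cosh y ^ (-b) ≤ 2 ^ b * exp (-b * |y|) := by
  have h : exp |y| / 2 ≤ cosh y := by
    rw [← cosh_abs, cosh_eq]
    linarith [exp_pos (-|y|)]
  calc cosh y ^ (-b) ≤ (exp |y| / 2) ^ (-b) :=
        rpow_le_rpow_of_nonpos (by positivity) h (neg_nonpos.2 hb)
    _ = 2 ^ b * exp (-b * |y|) := by
        rw [div_rpow (exp_pos _).le zero_le_two, ← exp_mul, rpow_neg zero_le_two, div_inv_eq_mul,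
          mul_comm, mul_comm |y|]

lemma Real.tendsto_cosh_rpow_neg_mul_exp (b : ℝ) :
    Tendsto (fun y => cosh y ^ (-b) * exp (b * y)) atTop (𝓝 (2 ^ b)) := by
  have hcosh : Tendsto (fun y => cosh y * exp (-y)) atTop (𝓝 (2⁻¹)) := by
    have h := ((tendsto_exp_neg_atTop_nhds_zero.pow 2).const_add 1).div_const 2
    refine (h.congr fun y => ?_).trans (by norm_num)
    rw [cosh_eq, div_mul_eq_mul_div, add_mul, ← exp_add, add_neg_cancel, exp_zero, sq]
  convert hcosh.rpow_const (p := -b) (Or.inl (by norm_num)) using 1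
  · ext y
    rw [mul_rpow (cosh_pos y).le (exp_pos _).le, ← exp_mul, neg_mul_neg, mul_comm y]
  · rw [inv_rpow zero_le_two, rpow_neg zero_le_two, inv_inv]

lemma mul_cosh_mul_rpow_neg_le {a b C : ℝ} (ha : 0 ≤ a) (hb : 0 ≤ b) (hC : 0 ≤ C) (t : ℝ) :
    C * cosh (a * t) ^ (-b) ≤ C * 2 ^ b * exp (-(a * b) * |t|) :=
  calc C * cosh (a * t) ^ (-b) ≤ C * (2 ^ b * exp (-b * |a * t|)) := by
        gcongr; exact cosh_rpow_neg_le hb _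
    _ = C * 2 ^ b * exp (-(a * b) * |t|) := by rw [abs_mul, abs_of_nonneg ha]; ring_nf

lemma tendsto_mul_cosh_mul_rpow_neg_mul_exp {a : ℝ} (ha : 0 < a) (b C : ℝ) :
    Tendsto (fun t => C * cosh (a * t) ^ (-b) * exp (a * b * t)) atTop (𝓝 (C * 2 ^ b)) := by
  refine ((tendsto_cosh_rpow_neg_mul_exp b).comp (tendsto_id.const_mul_atTop ha)).const_mul C
    |>.congr fun t => ?_
  simp only [Function.comp_apply, id]
  ring_nf

section ExponentialDecay

variable {w : ℝ → ℝ} {κ B : ℝ}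

lemma mul_exp_le_of_le_mul_exp_neg_abs (hw : ∀ x, 0 < w x) (hκ : 0 ≤ κ)
    (hdecay : ∀ x, w x ≤ B * exp (-κ * |x|)) (x : ℝ) : w x * exp (κ * x) ≤ B := by
  have hB : 0 ≤ B := nonneg_of_mul_nonneg_left ((hw x).le.trans (hdecay x)) (exp_pos _)
  calc w x * exp (κ * x) ≤ B * exp (-κ * |x|) * exp (κ * x) := by gcongr; exact hdecay x
    _ = B * exp (κ * (x - |x|)) := by rw [mul_assoc, ← exp_add]; ring_nf
    _ ≤ B := mul_le_of_le_one_right hB <| exp_le_one_iff.2 <|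
        mul_nonpos_of_nonneg_of_nonpos hκ (sub_nonpos.2 (le_abs_self x))

lemma integrable_rpow_mul_exp (hw : ∀ x, 0 < w x) (hw_meas : Measurable w) (hκ : 0 < κ)
    (hdecay : ∀ x, w x ≤ B * exp (-κ * |x|)) {η θ : ℝ} (hθ : 0 ≤ θ) (hηθ : θ < η) :
    Integrable fun t => w t ^ η * exp (θ * κ * t) := by
  have hB : 0 ≤ B := nonneg_of_mul_nonneg_left ((hw 0).le.trans (hdecay 0)) (exp_pos _)
  refine ((integrable_exp_neg_mul_abs (c := (η - θ) * κ) (by nlinarith)).const_mul (B ^ η)).mono'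
    (by fun_prop) (ae_of_all _ fun t => ?_)
  have hwt := hw t
  rw [norm_of_nonneg (by positivity)]
  calc w t ^ η * exp (θ * κ * t) ≤ (B * exp (-κ * |t|)) ^ η * exp (θ * κ * |t|) := by
        gcongr
        · linarith
        · exact hdecay t
        · exact le_abs_self t
    _ = B ^ η * exp (-((η - θ) * κ) * |t|) := by
        rw [mul_rpow hB (exp_pos _).le, ← exp_mul, mul_assoc, ← exp_add]
        ring_nf

lemma rpow_mul_rpow_sub_mul_exp_eq (hw : ∀ x, 0 ≤ w x) (hw_even : w.Even) (η θ t L : ℝ) :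
    w t ^ η * w (t - L) ^ θ * exp (θ * κ * L) =
      w t ^ η * exp (θ * κ * t) * (w (L - t) * exp (κ * (L - t))) ^ θ := by
  have hexp : exp (θ * κ * L) = exp (θ * κ * t) * exp (κ * (L - t) * θ) := by
    rw [← exp_add]; ring_nf
  rw [mul_rpow (hw _) (exp_pos _).le, ← exp_mul, ← neg_sub L t, hw_even, hexp]
  ring

variable {M : ℝ}

lemma tendsto_integral_rpow_mul_rpow_sub_mul_exp (hw : ∀ x, 0 < w x) (hw_even : w.Even)
    (hw_meas : Measurable w) (hκ : 0 < κ) (hdecay : ∀ x, w x ≤ B * exp (-κ * |x|))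
    (hlim : Tendsto (fun x => w x * exp (κ * x)) atTop (𝓝 M)) {η θ : ℝ} (hθ : 0 < θ)
    (hηθ : θ < η) :
    Tendsto (fun L => (∫ t, w t ^ η * w (t - L) ^ θ) * exp (θ * κ * L)) atTop
      (𝓝 (M ^ θ * ∫ t, w t ^ η * exp (θ * κ * t))) := by
  have hf := integrable_rpow_mul_exp hw hw_meas hκ hdecay hθ.le hηθ
  have hrepr : ∀ L, (∫ t, w t ^ η * w (t - L) ^ θ) * exp (θ * κ * L) =
      ∫ t, w t ^ η * exp (θ * κ * t) * (w (L - t) * exp (κ * (L - t))) ^ θ := fun L => by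
    rw [← integral_mul_const]
    simp_rw [rpow_mul_rpow_sub_mul_exp_eq (fun x => (hw x).le) hw_even]
  refine Tendsto.congr (fun L => (hrepr L).symm) ?_
  rw [mul_comm (M ^ θ), ← integral_mul_const]
  refine tendsto_integral_filter_of_dominated_convergence
    (fun t => w t ^ η * exp (θ * κ * t) * B ^ θ) (Eventually.of_forall fun L => by fun_prop)
    (Eventually.of_forall fun L => ae_of_all _ fun t => ?_) (hf.mul_const _)
    (ae_of_all _ fun t => ?_)
  · have hwt := hw t
    have hwLt := hw (L - t)
    rw [norm_of_nonneg (by positivity)]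
    gcongr
    exact mul_exp_le_of_le_mul_exp_neg_abs hw hκ.le hdecay _
  · have hshift : Tendsto (fun L : ℝ => L - t) atTop atTop := by
      simpa only [sub_eq_add_neg, id] using tendsto_atTop_add_const_right atTop (-t) tendsto_id
    exact ((hlim.comp hshift).rpow_const (Or.inr hθ.le)).const_mul _

theorem isEquivalent_integral_rpow_mul_rpow_sub (hw : ∀ x, 0 < w x) (hw_even : w.Even)
    (hw_meas : Measurable w) (hκ : 0 < κ) (hdecay : ∀ x, w x ≤ B * exp (-κ * |x|))
    (hM : 0 < M) (hlim : Tendsto (fun x => w x * exp (κ * x)) atTop (𝓝 M)) {η θ : ℝ}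
    (hθ : 0 < θ) (hηθ : θ < η) :
    (fun L => ∫ t, w t ^ η * w (t - L) ^ θ) ~[atTop]
      fun L => w L ^ θ * ∫ t, w t ^ η * exp (θ * κ * t) := by
  set I := ∫ t, w t ^ η * exp (θ * κ * t)
  have hI : 0 < I := by
    have hpos : ∀ t, 0 < w t ^ η * exp (θ * κ * t) := fun t => by have hwt := hw t; positivity
    rw [integral_pos_iff_support_of_nonneg (fun t => (hpos t).le)
      (integrable_rpow_mul_exp hw hw_meas hκ hdecay hθ.le hηθ),
      Function.support_eq_univ fun t => (hpos t).ne']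
    simp
  have hright : Tendsto (fun L => w L ^ θ * I * exp (θ * κ * L)) atTop (𝓝 (M ^ θ * I)) := by
    refine ((hlim.rpow_const (Or.inr hθ.le)).mul_const I).congr fun L => ?_
    rw [mul_rpow (hw L).le (exp_pos _).le, ← exp_mul]
    ring_nf
  refine isEquivalent_of_tendsto_one ?_
  have := (tendsto_integral_rpow_mul_rpow_sub_mul_exp hw hw_even hw_meas hκ hdecay hlim hθ
    hηθ).div hright (by positivity)
  rw [div_self (by positivity)] at this
  refine this.congr fun L => ?_
  simp only [Pi.div_apply]
  rw [mul_div_mul_right _ _ (exp_pos _).ne']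

theorem exists_pos_forall_abs_integral_sub_le (hw : ∀ x, 0 < w x) (hw_even : w.Even)
    (hw_meas : Measurable w) (hκ : 0 < κ) (hdecay : ∀ x, w x ≤ B * exp (-κ * |x|))
    (hM : 0 < M) (hlim : Tendsto (fun x => w x * exp (κ * x)) atTop (𝓝 M)) {η θ : ℝ}
    (hθ : 0 < θ) (hηθ : θ < η) {δ : ℝ} (hδ : 0 < δ) :
    ∃ R, 0 < R ∧ ∀ r s : ℝ, R ≤ |r - s| →
      |(∫ t, w (t - r) ^ η * w (t - s) ^ θ) - w |r - s| ^ θ * ∫ t, w t ^ η * exp (θ * κ * t)|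
        ≤ δ * (w |r - s| ^ θ * ∫ t, w t ^ η * exp (θ * κ * t)) := by
  have hv : ∀ L, 0 ≤ w L ^ θ * ∫ t, w t ^ η * exp (θ * κ * t) := fun L =>
    mul_nonneg (rpow_nonneg (hw L).le _)
      (integral_nonneg fun t => mul_nonneg (rpow_nonneg (hw t).le _) (exp_pos _).le)
  obtain ⟨R, hR, hRle⟩ := (isEquivalent_integral_rpow_mul_rpow_sub hw hw_even hw_meas hκ hdecay
    hM hlim hθ hηθ).exists_pos_forall_abs_sub_le hv hδ
  refine ⟨R, hR, fun r s hrs => ?_⟩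
  rw [integral_comp_sub_mul_comp_sub_of_even (f := fun x => w x ^ η) (g := fun x => w x ^ θ)
    (fun x => by simp only [hw_even x]) (fun x => by simp only [hw_even x])]
  exact hRle _ hrs

end ExponentialDecay

theorem interaction_integral_asymptotics_general (γ₀ p : ℝ) (hγ : 0 < γ₀) (hp : 1 < p)
    (w : ℝ → ℝ)
    (hw : ∀ t : ℝ, w t =
      γ₀ ^ (1 / (p - 1)) * ((p + 1) / 2) ^ (1 / (p - 1)) *
        (Real.cosh ((p - 1) / 2 * Real.sqrt γ₀ * t)) ^ (-2 / (p - 1)))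
    (η θ : ℝ) (hθ : 0 < θ) (hηθ : θ < η) :
    ∀ δ : ℝ, 0 < δ → ∃ R : ℝ, 0 < R ∧ ∀ r s : ℝ, R ≤ |r - s| →
      |(∫ t : ℝ, w (t - r) ^ η * w (t - s) ^ θ)
          - w |r - s| ^ θ * ∫ t : ℝ, w t ^ η * Real.exp (θ * Real.sqrt γ₀ * t)|
        ≤ δ * (w |r - s| ^ θ * ∫ t : ℝ, w t ^ η * Real.exp (θ * Real.sqrt γ₀ * t)) := by
  intro δ hδ
  set a := (p - 1) / 2 * √γ₀
  set b := 2 / (p - 1)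
  set C := γ₀ ^ (1 / (p - 1)) * ((p + 1) / 2) ^ (1 / (p - 1))
  have hp₁ : 0 < p - 1 := sub_pos.2 hp
  have ha : 0 < a := by positivity
  have hC : 0 < C := by positivity
  have hab : a * b = √γ₀ := by simp only [a, b]; field_simp
  obtain rfl : w = fun t => C * cosh (a * t) ^ (-b) := funext fun t => by rw [hw, neg_div]
  refine exists_pos_forall_abs_integral_sub_le (fun t => by positivity)
    (fun t => by simp only [mul_neg, cosh_neg]) (by fun_prop) (by positivity)
    (hab ▸ mul_cosh_mul_rpow_neg_le ha.le (by positivity) hC.le) (by positivity)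
    (hab ▸ tendsto_mul_cosh_mul_rpow_neg_mul_exp ha b C) hθ hηθ hδ

theorem interaction_integral_asymptotics (γ₀ p : ℝ) (hγ : 0 < γ₀) (hp : 1 < p)
    (w : ℝ → ℝ)
    (hw : ∀ t : ℝ, w t =
      γ₀ ^ (1 / (p - 1)) * ((p + 1) / 2) ^ (1 / (p - 1)) *
        (Real.cosh ((p - 1) / 2 * Real.sqrt γ₀ * t)) ^ (-2 / (p - 1)))
    (η θ : ℝ) (hθ : 0 < θ) (hηθ : θ < η) (hsum : η + θ ≤ p + 1) :
    ∀ δ : ℝ, 0 < δ → ∃ R : ℝ, 0 < R ∧ ∀ r s : ℝ, R ≤ |r - s| →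
      |(∫ t : ℝ, w (t - r) ^ η * w (t - s) ^ θ)
          - w |r - s| ^ θ * ∫ t : ℝ, w t ^ η * Real.exp (θ * Real.sqrt γ₀ * t)|
        ≤ δ * (w |r - s| ^ θ * ∫ t : ℝ, w t ^ η * Real.exp (θ * Real.sqrt γ₀ * t)) :=
  interaction_integral_asymptotics_general γ₀ p hγ hp w hw η θ hθ hηθ
end

section
/- The function φ(s) = −e^{−s/2}(1 − e^{−e^s}) satisfies φ'' − (1/4 + e^{2s}) φ − e^{3s/2} = 0 on ℝ, and φ(s) → 0 as |s| → ∞. -/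
/-!
Write `φ = ψ - u` with `u(s) = e^{-s/2}` and `ψ(s) = e^{-s/2 - e^s}`. If `f' = a f` then
`f'' = (a' + a²) f`; for `ψ` we have `a = -1/2 - e^s`, so `a' + a² = 1/4 + e^{2s}` and `ψ` solves the
homogeneous equation, while `u'' = u / 4` makes `-u` a particular solution because
`e^{2s} u = e^{3s/2}`. For the limits, `|φ(s)| = e^{-s/2} (1 - e^{-e^s})` is bounded by `e^{-s/2}`
and, since `1 - e^{-x} ≤ x`, by `e^{s/2}`.
-/

open Real Filter Topology

theorem hasDerivAt_deriv_of_hasDerivAt_mul_self {f a : ℝ → ℝ} {a' s : ℝ}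
    (hf : ∀ t, HasDerivAt f (a t * f t) t) (ha : HasDerivAt a a' s) :
    HasDerivAt (deriv f) ((a' + a s ^ 2) * f s) s := by
  have hderiv : deriv f = fun t => a t * f t := funext fun t => (hf t).deriv
  rw [hderiv]
  exact (ha.mul (hf s)).congr_deriv (by ring)

theorem hasDerivAt_neg_half (s : ℝ) : HasDerivAt (fun t : ℝ => -(t / 2)) (-(1 / 2)) s :=
  ((hasDerivAt_id' s).div_const 2).fun_neg.congr_deriv (by norm_num)

theorem hasDerivAt_exp_neg_half (s : ℝ) :
    HasDerivAt (fun t => exp (-(t / 2))) (-(1 / 2) * exp (-(s / 2))) s := by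
  simpa only [mul_comm] using (hasDerivAt_neg_half s).exp

theorem hasDerivAt_exp_neg_half_sub_exp (s : ℝ) :
    HasDerivAt (fun t => exp (-(t / 2) - exp t))
      ((-(1 / 2) - exp s) * exp (-(s / 2) - exp s)) s := by
  simpa only [mul_comm] using ((hasDerivAt_neg_half s).fun_sub (hasDerivAt_exp s)).exp

theorem hasDerivAt_deriv_exp_neg_half (s : ℝ) :
    HasDerivAt (deriv fun t => exp (-(t / 2))) (1 / 4 * exp (-(s / 2))) s := by
  convert hasDerivAt_deriv_of_hasDerivAt_mul_self hasDerivAt_exp_neg_half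
    (hasDerivAt_const s (-(1 / 2 : ℝ))) using 2
  norm_num

theorem hasDerivAt_deriv_exp_neg_half_sub_exp (s : ℝ) :
    HasDerivAt (deriv fun t => exp (-(t / 2) - exp t))
      ((1 / 4 + exp (2 * s)) * exp (-(s / 2) - exp s)) s := by
  convert hasDerivAt_deriv_of_hasDerivAt_mul_self hasDerivAt_exp_neg_half_sub_exp
    ((hasDerivAt_const s (-(1 / 2 : ℝ))).sub (hasDerivAt_exp s)) using 2
  rw [two_mul, exp_add]
  ring

theorem one_sub_exp_neg_exp_nonneg (s : ℝ) : 0 ≤ 1 - exp (-exp s) := by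
  have : exp (-exp s) ≤ 1 := exp_le_one_iff.mpr (neg_nonpos.mpr (exp_pos s).le)
  linarith

theorem tendsto_exp_neg_half_mul_one_sub_exp_neg_exp_atTop :
    Tendsto (fun s => exp (-(s / 2)) * (1 - exp (-exp s))) atTop (𝓝 0) := by
  refine squeeze_zero (fun s => mul_nonneg (exp_pos _).le (one_sub_exp_neg_exp_nonneg s))
    (fun s => mul_le_of_le_one_right (exp_pos _).le (by linarith [exp_pos (-exp s)])) ?_
  exact tendsto_exp_atBot.comp (tendsto_neg_atBot_iff.mpr (tendsto_id.atTop_div_const two_pos))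

theorem tendsto_exp_neg_half_mul_one_sub_exp_neg_exp_atBot :
    Tendsto (fun s => exp (-(s / 2)) * (1 - exp (-exp s))) atBot (𝓝 0) := by
  have hbound (s : ℝ) : exp (-(s / 2)) * (1 - exp (-exp s)) ≤ exp (s / 2) :=
    calc exp (-(s / 2)) * (1 - exp (-exp s))
        ≤ exp (-(s / 2)) * exp s :=
          mul_le_mul_of_nonneg_left (by linarith [one_sub_le_exp_neg (exp s)]) (exp_pos _).le
      _ = exp (s / 2) := by rw [← exp_add]; ring_nf
  refine squeeze_zero (fun s => mul_nonneg (exp_pos _).le (one_sub_exp_neg_exp_nonneg s))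
    hbound ?_
  exact tendsto_exp_atBot.comp (tendsto_id.atBot_div_const two_pos)

theorem correction_term_N3 (φ : ℝ → ℝ)
    (hφ : ∀ s : ℝ, φ s = -Real.exp (-(s / 2)) * (1 - Real.exp (-Real.exp s))) :
    (∀ s : ℝ, deriv (deriv φ) s - (1 / 4 + Real.exp (2 * s)) * φ s
      - Real.exp (3 * s / 2) = 0) ∧
    Filter.Tendsto φ Filter.atTop (nhds 0) ∧
    Filter.Tendsto φ Filter.atBot (nhds 0) := by
  have hφ_neg : φ = fun s => -(exp (-(s / 2)) * (1 - exp (-exp s))) :=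
    funext fun s => by rw [hφ, neg_mul]
  have hφ_sub : φ = fun s => exp (-(s / 2) - exp s) - exp (-(s / 2)) :=
    funext fun s => by rw [hφ, sub_eq_add_neg _ (exp s), exp_add]; ring
  have hφ' : deriv φ = fun s => deriv (fun t => exp (-(t / 2) - exp t)) s
      - deriv (fun t => exp (-(t / 2))) s := funext fun s => by
    rw [hφ_sub]
    exact deriv_fun_sub (hasDerivAt_exp_neg_half_sub_exp s).differentiableAt
      (hasDerivAt_exp_neg_half s).differentiableAt
  have hforcing (s : ℝ) : exp (2 * s) * exp (-(s / 2)) = exp (3 * s / 2) := by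
    rw [← exp_add]; ring_nf
  refine ⟨fun s => ?_, ?_, ?_⟩
  · rw [hφ', ((hasDerivAt_deriv_exp_neg_half_sub_exp s).fun_sub
      (hasDerivAt_deriv_exp_neg_half s)).deriv, hφ_sub]
    linear_combination hforcing s
  · simpa only [hφ_neg, neg_zero] using tendsto_exp_neg_half_mul_one_sub_exp_neg_exp_atTop.neg
  · simpa only [hφ_neg, neg_zero] using tendsto_exp_neg_half_mul_one_sub_exp_neg_exp_atBot.neg
end

section
/- The function φ(s) = −e^{−3s/2}(1 − (1 + e^s) e^{−e^s}) satisfies φ'' − (9/4 + e^{2s}) φ − e^{s/2} = 0 on ℝ, and φ(s) → 0 as |s| → ∞. -/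
/-!
Write `u = eˢ`. The function splits as `φ = -e^{-3s/2} + e^{-3s/2 - u} + e^{-s/2 - u}`.
Every term has the form `exp (a s + b eˢ)`, whose second derivative is `(a + b eˢ)² + b eˢ`
times itself, so the equation reduces to an identity between exponentials: `-e^{-3s/2}` is a
particular solution and the other two terms together solve the homogeneous equation.

For the limits, `φ s = -e^{-3s/2} g(eˢ)` with `g u = 1 - (1 + u) e^{-u}`. From
`1 - u ≤ e^{-u} ≤ 1/(1 + u)` we get `0 ≤ g u ≤ min 1 u²` for `u > -1`, which squeezes `φ`
between `-min e^{-3s/2} e^{s/2}` and `0`.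
-/

open Real Filter Topology

noncomputable def expAffineExp (a b s : ℝ) : ℝ := exp (a * s + b * exp s)

lemma hasDerivAt_expAffineExp (a b s : ℝ) :
    HasDerivAt (expAffineExp a b) ((a + b * exp s) * expAffineExp a b s) s := by
  have h : HasDerivAt (fun s => a * s + b * exp s) (a + b * exp s) s :=
    (((hasDerivAt_id' s).const_mul a).add ((hasDerivAt_exp s).const_mul b)).congr_deriv (by ring)
  exact h.exp.congr_deriv (mul_comm _ _)

lemma hasDerivAt_deriv_expAffineExp (a b s : ℝ) :
    HasDerivAt (fun s => (a + b * exp s) * expAffineExp a b s)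
      (((a + b * exp s) ^ 2 + b * exp s) * expAffineExp a b s) s := by
  have h := (((hasDerivAt_exp s).const_mul b).const_add a).mul (hasDerivAt_expAffineExp a b s)
  exact h.congr_deriv (by ring)

lemma deriv_deriv_eq_of_hasDerivAt {f f' f'' : ℝ → ℝ} (hf : ∀ x, HasDerivAt f (f' x) x)
    (hf' : ∀ x, HasDerivAt f' (f'' x) x) (x : ℝ) : deriv (deriv f) x = f'' x := by
  rw [funext fun y => (hf y).deriv]
  exact (hf' x).deriv

lemma one_sub_one_add_mul_exp_neg_nonneg (u : ℝ) : 0 ≤ 1 - (1 + u) * exp (-u) := by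
  rw [exp_neg, sub_nonneg, mul_inv_le_iff₀ (exp_pos u)]
  linarith [add_one_le_exp u]

lemma one_sub_one_add_mul_exp_neg_le_one {u : ℝ} (hu : -1 ≤ u) : 1 - (1 + u) * exp (-u) ≤ 1 := by
  have : 0 ≤ (1 + u) * exp (-u) := mul_nonneg (by linarith) (exp_pos _).le
  linarith

lemma one_sub_one_add_mul_exp_neg_le_sq {u : ℝ} (hu : -1 ≤ u) : 1 - (1 + u) * exp (-u) ≤ u ^ 2 := by
  nlinarith [mul_le_mul_of_nonneg_left (one_sub_le_exp_neg u) (by linarith : 0 ≤ 1 + u)]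

noncomputable def correctionN5 (s : ℝ) : ℝ :=
  -exp (-(3 * s / 2)) * (1 - (1 + exp s) * exp (-exp s))

lemma correctionN5_eq_sum :
    correctionN5 =
      -expAffineExp (-3 / 2) 0 + expAffineExp (-3 / 2) (-1) + expAffineExp (-1 / 2) (-1) := by
  funext s
  have h₀ : expAffineExp (-3 / 2) 0 s = exp (-(3 * s / 2)) := by
    simp only [expAffineExp]; ring_nf
  have h₁ : expAffineExp (-3 / 2) (-1) s = exp (-(3 * s / 2)) * exp (-exp s) := by
    simp only [expAffineExp, ← exp_add]; ring_nf
  have h₂ : expAffineExp (-1 / 2) (-1) s = exp (-(3 * s / 2)) * exp s * exp (-exp s) := by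
    simp only [expAffineExp, ← exp_add]; ring_nf
  simp only [correctionN5, Pi.add_apply, Pi.neg_apply, h₀, h₁, h₂]
  ring

lemma correctionN5_ode (s : ℝ) :
    deriv (deriv correctionN5) s - (9 / 4 + exp (2 * s)) * correctionN5 s - exp (s / 2) = 0 := by
  rw [correctionN5_eq_sum, deriv_deriv_eq_of_hasDerivAt
    (fun s => ((hasDerivAt_expAffineExp _ _ s).neg.add (hasDerivAt_expAffineExp _ _ s)).add
      (hasDerivAt_expAffineExp _ _ s))
    (fun s => ((hasDerivAt_deriv_expAffineExp _ _ s).neg.add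
      (hasDerivAt_deriv_expAffineExp _ _ s)).add (hasDerivAt_deriv_expAffineExp _ _ s))]
  have hB : expAffineExp (-1 / 2) (-1) s = exp s * expAffineExp (-3 / 2) (-1) s := by
    simp only [expAffineExp, ← exp_add]; ring_nf
  have hA : exp (2 * s) * expAffineExp (-3 / 2) 0 s = exp (s / 2) := by
    simp only [expAffineExp, ← exp_add]; ring_nf
  have hu : exp (2 * s) = exp s ^ 2 := by rw [← exp_nat_mul]; ring_nf
  simp only [Pi.add_apply, Pi.neg_apply, hB, ← hA, hu]
  ring

lemma correctionN5_nonpos (s : ℝ) : correctionN5 s ≤ 0 := by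
  have := one_sub_one_add_mul_exp_neg_nonneg (exp s)
  simp only [correctionN5, neg_mul, neg_nonpos]
  positivity

lemma neg_exp_le_correctionN5 (s : ℝ) : -exp (-(3 * s / 2)) ≤ correctionN5 s := by
  simp only [correctionN5, neg_mul, neg_le_neg_iff]
  exact mul_le_of_le_one_right (exp_pos _).le
    (one_sub_one_add_mul_exp_neg_le_one (by linarith [exp_pos s]))

lemma neg_exp_half_le_correctionN5 (s : ℝ) : -exp (s / 2) ≤ correctionN5 s := by
  have h : exp (s / 2) = exp (-(3 * s / 2)) * exp s ^ 2 := by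
    rw [← exp_nat_mul, ← exp_add]; ring_nf
  simp only [correctionN5, neg_mul, neg_le_neg_iff, h]
  exact mul_le_mul_of_nonneg_left (one_sub_one_add_mul_exp_neg_le_sq (by linarith [exp_pos s]))
    (exp_pos _).le

lemma tendsto_correctionN5_atTop : Tendsto correctionN5 atTop (𝓝 0) := by
  have h : Tendsto (fun s => -exp (-(3 * s / 2))) atTop (𝓝 0) := by
    simpa using (tendsto_exp_comp_nhds_zero.2 <| tendsto_neg_atTop_atBot.comp <|
      (tendsto_id.const_mul_atTop (by norm_num : (0 : ℝ) < 3)).atTop_div_const two_pos).neg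
  exact tendsto_of_tendsto_of_tendsto_of_le_of_le h tendsto_const_nhds
    neg_exp_le_correctionN5 correctionN5_nonpos

lemma tendsto_correctionN5_atBot : Tendsto correctionN5 atBot (𝓝 0) := by
  have h : Tendsto (fun s => -exp (s / 2)) atBot (𝓝 0) := by
    simpa using (tendsto_exp_comp_nhds_zero.2 <| tendsto_id.atBot_div_const two_pos).neg
  exact tendsto_of_tendsto_of_tendsto_of_le_of_le h tendsto_const_nhds
    neg_exp_half_le_correctionN5 correctionN5_nonpos

theorem correction_term_N5 (φ : ℝ → ℝ)
    (hφ : ∀ s : ℝ, φ s =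
      -Real.exp (-(3 * s / 2)) * (1 - (1 + Real.exp s) * Real.exp (-Real.exp s))) :
    (∀ s : ℝ, deriv (deriv φ) s - (9 / 4 + Real.exp (2 * s)) * φ s
      - Real.exp (s / 2) = 0) ∧
    Filter.Tendsto φ Filter.atTop (nhds 0) ∧
    Filter.Tendsto φ Filter.atBot (nhds 0) := by
  obtain rfl : φ = correctionN5 := funext hφ
  exact ⟨correctionN5_ode, tendsto_correctionN5_atTop, tendsto_correctionN5_atBot⟩
end
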